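/- arXiv:1305.5092 — 2 statements merged into one kernel-verified Lean document; each statement's English description precedes it below -/
import Mathlib

section
/- Let A = A_1 ⊔ A_2 ⊔ A_3 be a (3,4)-net in P^2(C) all of whose multiple points have multiplicity 2 or 3. Then exactly one of the following holds: (1) no class contains three concurrent lines and A has exactly 16 triple points (the mixed ones); (2) each of the three classes contains exactly one triple of concurrent lines and A has exactly 19 triple points; (3) exactly one class contains a triple of concurrent lines and A has exactly 17 triple points. -/
open scoped Classical

noncomputable section

/-- The complex projective plane `P²(ℂ)`. -/
abbrev ProjPlane : Type := Projectivization ℂ (Fin 3 → ℂ)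

/-- A subset of `P²(ℂ)` is a projective line if it is the zero locus of a nonzero
linear form. -/
def IsProjLine (S : Set ProjPlane) : Prop :=
  ∃ f : (Fin 3 → ℂ) →ₗ[ℂ] ℂ, f ≠ 0 ∧ S = {p : ProjPlane | f p.rep = 0}

/-- The lines of the arrangement `A` passing through the point `p`. -/
def linesThrough (A : Finset (Set ProjPlane)) (p : ProjPlane) : Finset (Set ProjPlane) :=
  A.filter fun L => p ∈ L

/-- The multiplicity of a point `p` with respect to the arrangement `A`. -/
def mult (A : Finset (Set ProjPlane)) (p : ProjPlane) : ℕ :=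
  (linesThrough A p).card

/-- `p` is a multiple point of the arrangement `A` (at least two lines pass through it). -/
def IsMultPoint (A : Finset (Set ProjPlane)) (p : ProjPlane) : Prop :=
  2 ≤ mult A p

/-- A `q`-cocycle of the line arrangement `A`: for every multiple point `p`,
if `q` divides the multiplicity then the values of `η` on the lines through `p` sum to `0`,
and otherwise `η` is constant on the lines through `p`. -/
def IsCocycle (q : ℕ) (A : Finset (Set ProjPlane)) (η : Set ProjPlane → ZMod q) : Prop :=
  ∀ p : ProjPlane, IsMultPoint A p →
    ((q ∣ mult A p → ∑ L ∈ linesThrough A p, η L = 0) ∧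
     (¬ q ∣ mult A p → ∀ L ∈ linesThrough A p, ∀ K ∈ linesThrough A p, η L = η K))

/-- A function on lines is non-constant on the arrangement `A`. -/
def NonConstant {α : Type*} (A : Finset (Set ProjPlane)) (η : Set ProjPlane → α) : Prop :=
  ∃ L ∈ A, ∃ K ∈ A, η L ≠ η K

/-- A `(k,q)`-net structure on the line arrangement `A`, with classes `C 0, …, C (k-1)`:
the classes partition `A` into `k` classes of `q` lines each, and whenever two lines from
different classes meet, their intersection point lies on exactly one line of each class. -/
def IsNet (k q : ℕ) (A : Finset (Set ProjPlane)) (C : Fin k → Finset (Set ProjPlane)) : Prop :=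
  (∀ L ∈ A, IsProjLine L) ∧
  A.card = k * q ∧
  (∀ i, (C i).card = q) ∧
  (∀ i j, i ≠ j → Disjoint (C i) (C j)) ∧
  (∀ i, C i ⊆ A) ∧
  (∀ L ∈ A, ∃ i, L ∈ C i) ∧
  (∀ i j, i ≠ j → ∀ L ∈ C i, ∀ K ∈ C j, ∀ p : ProjPlane, p ∈ L → p ∈ K →
    ∀ m : Fin k, ∃! N, N ∈ C m ∧ p ∈ N)

/-- Lattice isomorphism of two line arrangements: a bijection between the lines such that
a subfamily of lines has a common point iff the image subfamily has a common point. -/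
def LatticeIso (A B : Finset (Set ProjPlane)) : Prop :=
  ∃ φ : Set ProjPlane → Set ProjPlane, Set.BijOn φ ↑A ↑B ∧
    ∀ S : Finset (Set ProjPlane), S ⊆ A →
      ((∃ p : ProjPlane, ∀ L ∈ S, p ∈ L) ↔ ∃ p : ProjPlane, ∀ L ∈ S, p ∈ φ L)

/-- The projective line with homogeneous equation `a·x + b·y + c·z = 0`. -/
def lineOf (a b c : ℂ) : Set ProjPlane :=
  {p : ProjPlane | a * p.rep 0 + b * p.rep 1 + c * p.rep 2 = 0}

/-- `S` contains three distinct concurrent lines. -/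
def HasConcurrentTriple (S : Finset (Set ProjPlane)) : Prop :=
  ∃ L ∈ S, ∃ M ∈ S, ∃ N ∈ S, L ≠ M ∧ L ≠ N ∧ M ≠ N ∧
    ∃ p : ProjPlane, p ∈ L ∧ p ∈ M ∧ p ∈ N

/-!
Every multiple point of a net is either mixed, lying on exactly one line of each class, or has all
its lines in a single class. The mixed points are the `4 * 4 = 16` intersections of a line of
class 0 with a line of class 1, and here they are exactly triple; a point where three lines of one
class meet is triple as well, and a class of four lines has at most one such point, since two of
them would share two lines. Hence there are `16 + t` triple points, where `t` is the number of
classes containing a concurrent triple, and it remains to show `t ≠ 2`.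

Suppose classes `i` and `j` contain concurrent triples, through `p₀` and `p₁`. The net is a Latin
square of order 4 whose entry `r_L (M)` at `(L, M) ∈ Cᵢ × Cⱼ` is the class-`k` line through
`L ∩ M`. For three rows `L₀, L₁, L₂` through `p₀`, the permutations `r_{L₀}⁻¹ r_{L₁}` and
`r_{L₀}⁻¹ r_{L₂}` of `Cⱼ` are derangements differing at every point, and in order 4 such
permutations commute. This yields three columns `M₀, M₁, M₂` through `p₁` with
`r_{L_a} (M_b) = r_{L_b} (M_a)`: the class-`k` lines joining `L_a ∩ M_b` and `L_b ∩ M_a` are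
three distinct lines, and by the dual of Pappus' theorem they are concurrent.
-/

theorem injective_vec3 {α : Type*} {a b c : α} (hab : a ≠ b) (hac : a ≠ c) (hbc : b ≠ c) :
    Function.Injective ![a, b, c] := by
  rw [Matrix.vecCons, Fin.cons_injective_iff, Matrix.range_cons_cons_empty, injective_pair_iff_ne]
  simp [*]

theorem Equiv.Perm.apply_apply_comm_fin_four :
    ∀ σ τ : Equiv.Perm (Fin 4), (∀ a, σ a ≠ a) → (∀ a, τ a ≠ a) → (∀ a, σ a ≠ τ a) →
      ∀ a, σ (τ a) = τ (σ a) := by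
  decide

theorem Equiv.Perm.apply_apply_comm_of_card_eq_four {β : Type*} [Fintype β]
    (hβ : Fintype.card β = 4) {σ τ : Equiv.Perm β} (hσ : ∀ b, σ b ≠ b) (hτ : ∀ b, τ b ≠ b)
    (hστ : ∀ b, σ b ≠ τ b) (b : β) : σ (τ b) = τ (σ b) := by
  let e := Fintype.equivFinOfCardEq hβ
  have h := apply_apply_comm_fin_four (e.permCongr σ) (e.permCongr τ)
    (fun a h => hσ (e.symm a) (e.symm_apply_eq.2 h.symm).symm)
    (fun a h => hτ (e.symm a) (e.symm_apply_eq.2 h.symm).symm)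
    (fun a h => hστ (e.symm a) (e.injective h)) (e b)
  simpa [Equiv.permCongr_apply] using h

theorem exists_symmetric_subsquare {α β γ : Type*} [Fintype β] [Fintype γ]
    (hβ : Fintype.card β = 4) (hγ : Fintype.card γ = 4) (f : α → β → γ)
    (hrow : ∀ x, Function.Injective (f x)) (hcol : ∀ y, Function.Injective (f · y))
    {x : Fin 3 → α} (hx : Function.Injective x) (y₀ : β) :
    ∃ y : Fin 3 → β, Function.Injective y ∧ (∀ a, y a ≠ y₀) ∧
      ∀ a b, f (x a) (y b) = f (x b) (y a) := by
  classical
  let r : Fin 3 → β ≃ γ := fun a => Equiv.ofBijective (f (x a))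
    ((Fintype.bijective_iff_injective_and_card _).2 ⟨hrow _, hβ.trans hγ.symm⟩)
  let σ : Equiv.Perm β := (r 1).trans (r 0).symm
  let τ : Equiv.Perm β := (r 2).trans (r 0).symm
  have hσ : ∀ b, f (x 0) (σ b) = f (x 1) b := fun b => (r 0).apply_symm_apply _
  have hτ : ∀ b, f (x 0) (τ b) = f (x 2) b := fun b => (r 0).apply_symm_apply _
  have hcol' : ∀ {a a'} b, a ≠ a' → f (x a) b ≠ f (x a') b := fun b h e => h (hx (hcol b e))
  have hσb : ∀ b, σ b ≠ b := fun b e => hcol' b (by decide : (0 : Fin 3) ≠ 1) (by rw [← hσ b, e])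
  have hτb : ∀ b, τ b ≠ b := fun b e => hcol' b (by decide : (0 : Fin 3) ≠ 2) (by rw [← hτ b, e])
  have hστ : ∀ b, σ b ≠ τ b := fun b e =>
    hcol' b (by decide : (1 : Fin 3) ≠ 2) (by rw [← hσ, ← hτ, e])
  have hcomm := Equiv.Perm.apply_apply_comm_of_card_eq_four hβ hσb hτb hστ
  obtain ⟨y₁, -, hy₁⟩ := Finset.exists_mem_notMem_of_card_lt_card
    (s := {y₀, σ.symm y₀, τ.symm y₀}) (t := Finset.univ)
    (Finset.card_le_three.trans_lt (by rw [Finset.card_univ, hβ]; decide))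
  simp only [Finset.mem_insert, Finset.mem_singleton, not_or] at hy₁
  obtain ⟨h₀, hσ₀, hτ₀⟩ := hy₁
  refine ⟨![y₁, σ y₁, τ y₁], injective_vec3 (hσb y₁).symm (hτb y₁).symm (hστ y₁),
    fun a => ?_, fun a b => ?_⟩
  · fin_cases a
    exacts [h₀, fun h => hσ₀ (σ.eq_symm_apply.2 h), fun h => hτ₀ (τ.eq_symm_apply.2 h)]
  · have h₁₂ : f (x 1) (τ y₁) = f (x 2) (σ y₁) := by rw [← hσ, ← hτ, hcomm]
    fin_cases a <;> fin_cases b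
    exacts [rfl, hσ y₁, hτ y₁, (hσ y₁).symm, rfl, h₁₂, (hτ y₁).symm, h₁₂.symm, rfl]

namespace ProjPlane

open Matrix Projectivization

def polar (n : ProjPlane) : Set ProjPlane := {p | n.orthogonal p}

theorem orthogonal_iff_rep {u v : ProjPlane} : u.orthogonal v ↔ u.rep ⬝ᵥ v.rep = 0 := by
  conv_lhs => rw [← u.mk_rep, ← v.mk_rep]
  exact orthogonal_mk _ _

theorem orthogonal_mk_iff {v : Fin 3 → ℂ} (hv : v ≠ 0) (p : ProjPlane) :
    (mk ℂ v hv).orthogonal p ↔ v ⬝ᵥ p.rep = 0 := by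
  conv_lhs => rw [← p.mk_rep]
  exact orthogonal_mk hv p.rep_nonzero

theorem _root_.IsProjLine.exists_eq_polar {L : Set ProjPlane} (hL : IsProjLine L) :
    ∃ n, L = polar n := by
  obtain ⟨f, hf, rfl⟩ := hL
  set n : Fin 3 → ℂ := fun i => f fun j => if i = j then 1 else 0
  have hfn : ∀ x, f x = n ⬝ᵥ x := fun x => by
    rw [f.pi_apply_eq_sum_univ x, dotProduct]
    simp only [n, smul_eq_mul, mul_comm]
  have hn : n ≠ 0 := fun h0 => hf (LinearMap.ext fun x => by simp [hfn, h0])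
  refine ⟨mk ℂ n hn, Set.ext fun p => ?_⟩
  show f p.rep = 0 ↔ (mk ℂ n hn).orthogonal p
  rw [hfn]
  exact (orthogonal_mk_iff hn p).symm

theorem eq_cross_of_orthogonal {u v w : ProjPlane} (hvw : v ≠ w) (hv : u.orthogonal v)
    (hw : u.orthogonal w) : u = cross v w := by
  induction u using Projectivization.ind with | h u hu =>
  induction v using Projectivization.ind with | h v hv' =>
  induction w using Projectivization.ind with | h w hw' =>
  rw [orthogonal_mk] at hv hw
  rw [cross_mk_of_ne hv' hw' hvw, mk_eq_mk_iff_crossProduct_eq_zero,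
    cross_cross_eq_smul_sub_smul', hw, dotProduct_comm, hv, zero_smul, zero_smul, sub_zero]

variable {L M : Set ProjPlane}

theorem _root_.IsProjLine.inter_nonempty (hL : IsProjLine L) (hM : IsProjLine M) (h : L ≠ M) :
    (L ∩ M).Nonempty := by
  obtain ⟨n, rfl⟩ := hL.exists_eq_polar
  obtain ⟨m, rfl⟩ := hM.exists_eq_polar
  have hnm : n ≠ m := fun e => h (e ▸ rfl)
  exact ⟨cross n m, orthogonal_cross_left hnm, orthogonal_cross_right hnm⟩

theorem _root_.IsProjLine.inter_subsingleton (hL : IsProjLine L) (hM : IsProjLine M)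
    (h : L ≠ M) : (L ∩ M).Subsingleton := by
  obtain ⟨n, rfl⟩ := hL.exists_eq_polar
  obtain ⟨m, rfl⟩ := hM.exists_eq_polar
  have hnm : n ≠ m := fun e => h (e ▸ rfl)
  have key : ∀ p ∈ polar n ∩ polar m, p = cross n m := fun p hp =>
    eq_cross_of_orthogonal hnm (orthogonal_comm.1 hp.1) (orthogonal_comm.1 hp.2)
  exact fun p hp q hq => (key p hp).trans (key q hq).symm

def meet (L M : Set ProjPlane) : ProjPlane := Classical.epsilon fun p => p ∈ L ∩ M

theorem meet_mem (hL : IsProjLine L) (hM : IsProjLine M) (h : L ≠ M) : meet L M ∈ L ∩ M :=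
  Classical.epsilon_spec (hL.inter_nonempty hM h)

theorem meet_polar {n m : ProjPlane} (h : n ≠ m) : meet (polar n) (polar m) = cross n m := by
  have hmem : meet (polar n) (polar m) ∈ polar n ∩ polar m :=
    Classical.epsilon_spec ⟨cross n m, orthogonal_cross_left h, orthogonal_cross_right h⟩
  exact eq_cross_of_orthogonal h (orthogonal_comm.1 hmem.1) (orthogonal_comm.1 hmem.2)

theorem exists_orthogonal_of_triple_product_eq_zero {x y z : Fin 3 → ℂ} (hx : x ≠ 0)
    (hy : y ≠ 0) (hz : z ≠ 0) (h : x ⬝ᵥ y ⨯₃ z = 0) :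
    ∃ q, (mk ℂ x hx).orthogonal q ∧ (mk ℂ y hy).orthogonal q ∧ (mk ℂ z hz).orthogonal q := by
  rw [triple_product_eq_det] at h
  obtain ⟨w, hw, hmul⟩ := Matrix.exists_mulVec_eq_zero_iff.2 h
  refine ⟨mk ℂ w hw, ?_, ?_, ?_⟩ <;> rw [orthogonal_mk]
  exacts [congrFun hmul 0, congrFun hmul 1, congrFun hmul 2]

theorem mk_smul_rep {c : ℂ} (hc : c ≠ 0) (u : ProjPlane) :
    mk ℂ (c • u.rep) (smul_ne_zero hc u.rep_nonzero) = u := by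
  conv_rhs => rw [← u.mk_rep]
  exact (mk_eq_mk_iff ℂ _ _ _ _).2 ⟨Units.mk0 c hc, rfl⟩

theorem mem_span_pair_of_dotProduct_eq_zero {K : Type*} [Field K] {a b e w : Fin 3 → K}
    (hw : w ≠ 0) (hab : LinearIndependent K ![a, b]) (ha : a ⬝ᵥ w = 0) (hb : b ⬝ᵥ w = 0)
    (he : e ⬝ᵥ w = 0) : e ∈ Submodule.span K {a, b} := by
  have hdet : (of ![e, a, b]).det = 0 := by
    refine Matrix.exists_mulVec_eq_zero_iff.1 ⟨w, hw, ?_⟩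
    ext i
    fin_cases i
    exacts [he, ha, hb]
  have hdep : ¬ LinearIndependent K ![e, a, b] := fun h => by
    simpa [hdet] using (Matrix.isUnit_iff_isUnit_det _).1
      ((Matrix.linearIndependent_rows_iff_isUnit (A := of ![e, a, b])).1 h)
  rw [Matrix.vecCons, linearIndependent_finCons, Matrix.range_cons_cons_empty] at hdep
  tauto

theorem exists_eq_mk_add_of_orthogonal {l : Fin 3 → ProjPlane} (hl : Function.Injective l)
    {p : ProjPlane} (hp : ∀ a, (l a).orthogonal p) :
    ∃ (x y : Fin 3 → ℂ) (hx : x ≠ 0) (hy : y ≠ 0) (hxy : x + y ≠ 0),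
      l = ![mk ℂ x hx, mk ℂ y hy, mk ℂ (x + y) hxy] := by
  have hab : LinearIndependent ℂ ![(l 0).rep, (l 1).rep] := by
    rw [← crossProduct_ne_zero_iff_linearIndependent, ne_eq, ← mk_eq_mk_iff_crossProduct_eq_zero
      (l 0).rep_nonzero (l 1).rep_nonzero, mk_rep, mk_rep]
    exact hl.ne (by decide)
  have hspan := mem_span_pair_of_dotProduct_eq_zero p.rep_nonzero hab
    (orthogonal_iff_rep.1 (hp 0)) (orthogonal_iff_rep.1 (hp 1)) (orthogonal_iff_rep.1 (hp 2))
  obtain ⟨s, t, hst⟩ := Submodule.mem_span_pair.1 hspan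
  have hs : s ≠ 0 := by
    rintro rfl
    have ht : t ≠ 0 := by
      rintro rfl
      exact (l 2).rep_nonzero (by simpa using hst.symm)
    refine hl.ne (show (1 : Fin 3) ≠ 2 by decide) ?_
    rw [← mk_smul_rep ht (l 1), ← (l 2).mk_rep]
    simp only [← hst, zero_smul, zero_add]
  have ht : t ≠ 0 := by
    rintro rfl
    refine hl.ne (show (0 : Fin 3) ≠ 2 by decide) ?_
    rw [← mk_smul_rep hs (l 0), ← (l 2).mk_rep]
    simp only [← hst, zero_smul, add_zero]
  refine ⟨s • (l 0).rep, t • (l 1).rep, smul_ne_zero hs (l 0).rep_nonzero,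
    smul_ne_zero ht (l 1).rep_nonzero, hst ▸ (l 2).rep_nonzero, ?_⟩
  have hl₂ : l 2 = mk ℂ (s • (l 0).rep + t • (l 1).rep) (hst ▸ (l 2).rep_nonzero) := by
    conv_lhs => rw [← (l 2).mk_rep]
    simp only [hst]
  ext a : 1
  fin_cases a
  exacts [(mk_smul_rep hs _).symm, (mk_smul_rep ht _).symm, hl₂]
theorem pappus_triple_product {R : Type*} [CommRing R] (x y u v : Fin 3 → R) :
    (x ⨯₃ v) ⨯₃ (y ⨯₃ u) ⬝ᵥ
      ((x ⨯₃ (u + v)) ⨯₃ ((x + y) ⨯₃ u)) ⨯₃ ((y ⨯₃ (u + v)) ⨯₃ ((x + y) ⨯₃ v)) = 0 := by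
  obtain ⟨hX, hY, hZ⟩ :
      (x ⨯₃ v) ⨯₃ (y ⨯₃ u) = (x ⬝ᵥ v ⨯₃ u) • y - (x ⬝ᵥ v ⨯₃ y) • u ∧
      (x ⨯₃ (u + v)) ⨯₃ ((x + y) ⨯₃ u) =
        (x ⬝ᵥ v ⨯₃ u) • (x + y) - (x ⬝ᵥ u ⨯₃ y + x ⬝ᵥ v ⨯₃ y) • u ∧
      (y ⨯₃ (u + v)) ⨯₃ ((x + y) ⨯₃ v) =
        (y ⬝ᵥ u ⨯₃ v) • (x + y) + (x ⬝ᵥ u ⨯₃ y + x ⬝ᵥ v ⨯₃ y) • v := by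
    refine ⟨?_, ?_, ?_⟩ <;> ext i <;> fin_cases i <;>
      simp only [Fin.zero_eta, Fin.mk_one, Fin.reduceFinMk, vec3_dotProduct, cross_apply,
        Pi.add_apply, Pi.sub_apply, Pi.smul_apply, smul_eq_mul, cons_val_zero, cons_val_one,
        cons_val_two, head_cons, tail_cons] <;>
      ring
  rw [hX, hY, hZ]
  generalize hα : x ⬝ᵥ v ⨯₃ u = α
  generalize hβ : x ⬝ᵥ v ⨯₃ y = β
  generalize hγ : x ⬝ᵥ u ⨯₃ y = γ
  generalize hδ : y ⬝ᵥ u ⨯₃ v = δ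
  simp only [vec3_dotProduct, cross_apply, Pi.add_apply, Pi.sub_apply, Pi.smul_apply, smul_eq_mul,
    cons_val_zero, cons_val_one, cons_val_two, head_cons, tail_cons] at hα hβ hγ hδ ⊢
  -- Expanding multilinearly, every triple product of `x, y, u, v` left over is `±α`, `±β`, `±γ`
  -- or `δ`, and after substituting these the terms cancel.
  linear_combination (α ^ 2 * (γ + β)) * hβ + (α * γ * δ + α * β * δ) * hγ -
    (α * γ * (γ + β)) * hδ - (α * β * (γ + β)) * hα

theorem cross_cross_mk {P Q R S : Fin 3 → ℂ} (hP : P ≠ 0) (hQ : Q ≠ 0) (hR : R ≠ 0) (hS : S ≠ 0)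
    (hPS : mk ℂ P hP ≠ mk ℂ S hS) (hQR : mk ℂ Q hQ ≠ mk ℂ R hR)
    (h : cross (mk ℂ P hP) (mk ℂ S hS) ≠ cross (mk ℂ Q hQ) (mk ℂ R hR)) :
    ∃ h', cross (cross (mk ℂ P hP) (mk ℂ S hS)) (cross (mk ℂ Q hQ) (mk ℂ R hR)) =
      mk ℂ ((P ⨯₃ S) ⨯₃ (Q ⨯₃ R)) h' := by
  rw [cross_mk_of_ne hP hS hPS, cross_mk_of_ne hQ hR hQR] at h ⊢
  exact ⟨_, cross_mk_of_ne _ _ h⟩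

theorem exists_orthogonal_dual_pappus {p₀ p₁ : ProjPlane} {l m : Fin 3 → ProjPlane}
    (hl : Function.Injective l) (hm : Function.Injective m)
    (hl₀ : ∀ a, (l a).orthogonal p₀) (hm₁ : ∀ a, (m a).orthogonal p₁)
    (hlm : ∀ a b, a ≠ b → l a ≠ m b)
    (hw : ∀ a b, a ≠ b → cross (l a) (m b) ≠ cross (l b) (m a)) :
    ∃ q, ∀ a b, a ≠ b → (cross (cross (l a) (m b)) (cross (l b) (m a))).orthogonal q := by
  obtain ⟨x, y, hx, hy, hxy, rfl⟩ := exists_eq_mk_add_of_orthogonal hl hl₀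
  obtain ⟨u, v, hu, hv, huv, rfl⟩ := exists_eq_mk_add_of_orthogonal hm hm₁
  obtain ⟨h₀₁, e₀₁⟩ := cross_cross_mk hx hy hu hv (hlm 0 1 (by decide)) (hlm 1 0 (by decide))
    (hw 0 1 (by decide))
  obtain ⟨h₀₂, e₀₂⟩ := cross_cross_mk hx hxy hu huv (hlm 0 2 (by decide)) (hlm 2 0 (by decide))
    (hw 0 2 (by decide))
  obtain ⟨h₁₂, e₁₂⟩ := cross_cross_mk hy hxy hv huv (hlm 1 2 (by decide)) (hlm 2 1 (by decide))
    (hw 1 2 (by decide))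
  obtain ⟨q, hq₀₁, hq₀₂, hq₁₂⟩ :=
    exists_orthogonal_of_triple_product_eq_zero h₀₁ h₀₂ h₁₂ (pappus_triple_product x y u v)
  rw [← e₀₁] at hq₀₁
  rw [← e₀₂] at hq₀₂
  rw [← e₁₂] at hq₁₂
  have hswap : ∀ {A B : ProjPlane}, (cross A B).orthogonal q → (cross B A).orthogonal q :=
    fun {A B} h => cross_comm A B ▸ h
  refine ⟨q, fun a b hab => ?_⟩
  fin_cases a <;> fin_cases b
  exacts [absurd rfl hab, hq₀₁, hq₀₂, hswap hq₀₁, absurd rfl hab, hq₁₂, hswap hq₀₂, hswap hq₁₂,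
    absurd rfl hab]

theorem dual_pappus {L M : Fin 3 → Set ProjPlane} {N : Fin 3 → Fin 3 → Set ProjPlane}
    (hL : ∀ a, IsProjLine (L a)) (hM : ∀ a, IsProjLine (M a)) (hN : ∀ a b, IsProjLine (N a b))
    (hL_inj : Function.Injective L) (hM_inj : Function.Injective M) {p₀ p₁ : ProjPlane}
    (hp₀ : ∀ a, p₀ ∈ L a) (hp₁ : ∀ a, p₁ ∈ M a) (hLM : ∀ a b, a ≠ b → L a ≠ M b)
    (hmeet : ∀ a b, a ≠ b → meet (L a) (M b) ≠ meet (L b) (M a))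
    (hmeetN : ∀ a b, a ≠ b → meet (L a) (M b) ∈ N a b ∧ meet (L b) (M a) ∈ N a b) :
    ∃ q, ∀ a b, a ≠ b → q ∈ N a b := by
  choose l hl using fun a => (hL a).exists_eq_polar
  choose m hm using fun a => (hM a).exists_eq_polar
  choose n hn using fun a b => (hN a b).exists_eq_polar
  have hlm : ∀ a b, a ≠ b → l a ≠ m b := fun a b hab e => hLM a b hab (by rw [hl, hm, e])
  have hcross : ∀ a b, a ≠ b → meet (L a) (M b) = cross (l a) (m b) := fun a b hab => by
    rw [hl, hm, meet_polar (hlm a b hab)]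
  have hw : ∀ a b, a ≠ b → cross (l a) (m b) ≠ cross (l b) (m a) := fun a b hab => by
    rw [← hcross a b hab, ← hcross b a hab.symm]
    exact hmeet a b hab
  obtain ⟨q, hq⟩ := exists_orthogonal_dual_pappus
    (fun a b e => hL_inj (by rw [hl, hl, e])) (fun a b e => hM_inj (by rw [hm, hm, e]))
    (fun a => hl a ▸ hp₀ a) (fun a => hm a ▸ hp₁ a) hlm hw
  refine ⟨q, fun a b hab => ?_⟩
  obtain ⟨h₁, h₂⟩ := hmeetN a b hab
  rw [hn, hcross a b hab] at h₁
  rw [hn, hcross b a hab.symm] at h₂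
  rw [hn, eq_cross_of_orthogonal (hw a b hab) h₁ h₂]
  exact hq a b hab

end ProjPlane

section Arrangements

open Finset

theorem hasConcurrentTriple_iff {S : Finset (Set ProjPlane)} :
    HasConcurrentTriple S ↔ ∃ p, 3 ≤ (linesThrough S p).card := by
  constructor
  · rintro ⟨L, hL, M, hM, N, hN, hLM, hLN, hMN, p, hpL, hpM, hpN⟩
    refine ⟨p, (card_eq_three.2 ⟨L, M, N, hLM, hLN, hMN, rfl⟩).symm.le.trans (card_le_card ?_)⟩
    simp [insert_subset_iff, linesThrough, *]
  · rintro ⟨p, hp⟩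
    obtain ⟨T, hT, hT3⟩ := exists_subset_card_eq hp
    obtain ⟨L, M, N, hLM, hLN, hMN, rfl⟩ := card_eq_three.1 hT3
    simp only [insert_subset_iff, singleton_subset_iff, linesThrough, mem_filter] at hT
    exact ⟨L, hT.1.1, M, hT.2.1.1, N, hT.2.2.1, hLM, hLN, hMN, p, hT.1.2, hT.2.1.2, hT.2.2.2⟩

def triplePoints (S : Finset (Set ProjPlane)) : Set ProjPlane :=
  {p | (linesThrough S p).card = 3}

theorem triplePoints_subsingleton {S : Finset (Set ProjPlane)} (hS : ∀ L ∈ S, IsProjLine L)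
    (hcard : S.card ≤ 4) : (triplePoints S).Subsingleton := by
  intro p hp p' hp'
  have hunion : (linesThrough S p ∪ linesThrough S p').card ≤ 4 :=
    (card_le_card (union_subset (filter_subset _ _) (filter_subset _ _))).trans hcard
  have hinter := card_inter_add_card_union (linesThrough S p) (linesThrough S p')
  have h3 : (linesThrough S p).card = 3 := hp
  have h3' : (linesThrough S p').card = 3 := hp'
  obtain ⟨L, hL, K, hK, hLK⟩ :=
    one_lt_card.1 (by omega : 1 < (linesThrough S p ∩ linesThrough S p').card)
  simp only [linesThrough, mem_inter, mem_filter] at hL hK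
  exact (hS L hL.1.1).inter_subsingleton (hS K hK.1.1) hLK ⟨hL.1.2, hK.1.2⟩ ⟨hL.2.2, hK.2.2⟩

def lineThrough (S : Finset (Set ProjPlane)) (p : ProjPlane) : Set ProjPlane :=
  Classical.epsilon fun N => N ∈ S ∧ p ∈ N

def mixedPoints (C : Fin 3 → Finset (Set ProjPlane)) : Finset ProjPlane :=
  (C 0 ×ˢ C 1).image fun LK => ProjPlane.meet LK.1 LK.2

end Arrangements

namespace IsNet

open ProjPlane

section
variable {k q : ℕ} {A : Finset (Set ProjPlane)} {C : Fin k → Finset (Set ProjPlane)}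
  {i j m : Fin k} {L L' K M M' N N' : Set ProjPlane} {p : ProjPlane}

theorem card_class (hA : IsNet k q A C) (i : Fin k) : (C i).card = q := hA.2.2.1 i

theorem mem_of_mem_class (hA : IsNet k q A C) (hL : L ∈ C i) : L ∈ A := hA.2.2.2.2.1 i hL

theorem isProjLine (hA : IsNet k q A C) (hL : L ∈ C i) : IsProjLine L :=
  hA.1 L (hA.mem_of_mem_class hL)

theorem exists_mem_class (hA : IsNet k q A C) (hL : L ∈ A) : ∃ i, L ∈ C i := hA.2.2.2.2.2.1 L hL

theorem eq_of_mem_class (hA : IsNet k q A C) (hi : L ∈ C i) (hj : L ∈ C j) : i = j := by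
  by_contra hij
  exact Finset.disjoint_left.1 (hA.2.2.2.1 i j hij) hi hj

theorem ne_of_mem_class (hA : IsNet k q A C) (hij : i ≠ j) (hL : L ∈ C i) (hK : K ∈ C j) :
    L ≠ K :=
  fun h => hij (hA.eq_of_mem_class hL (h ▸ hK))

theorem exists_mem_class_of_mem (hA : IsNet k q A C) (hij : i ≠ j) (hL : L ∈ C i)
    (hK : K ∈ C j) (hpL : p ∈ L) (hpK : p ∈ K) (m : Fin k) : ∃ N ∈ C m, p ∈ N :=
  (hA.2.2.2.2.2.2 i j hij L hL K hK p hpL hpK m).exists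

theorem eq_of_mem_of_mem (hA : IsNet k q A C) (hij : i ≠ j) (hL : L ∈ C i) (hK : K ∈ C j)
    (hpL : p ∈ L) (hpK : p ∈ K) (hN : N ∈ C m) (hN' : N' ∈ C m) (hpN : p ∈ N) (hpN' : p ∈ N') :
    N = N' :=
  (hA.2.2.2.2.2.2 i j hij L hL K hK p hpL hpK m).unique ⟨hN, hpN⟩ ⟨hN', hpN'⟩

theorem mem_class_of_mem (hA : IsNet k q A C) (hL : L ∈ C i) (hK : K ∈ C i) (hLK : L ≠ K)
    (hpL : p ∈ L) (hpK : p ∈ K) (hN : N ∈ A) (hpN : p ∈ N) : N ∈ C i := by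
  obtain ⟨j, hNj⟩ := hA.exists_mem_class hN
  by_cases hji : j = i
  · exact hji ▸ hNj
  · exact absurd (hA.eq_of_mem_of_mem hji hNj hL hpN hpL hL hK hpL hpK) hLK

theorem linesThrough_eq (hA : IsNet k q A C) (h : 2 ≤ (linesThrough (C i) p).card) :
    linesThrough A p = linesThrough (C i) p := by
  obtain ⟨L, hL, K, hK, hLK⟩ := Finset.one_lt_card.1 h
  simp only [linesThrough, Finset.mem_filter] at hL hK
  ext N
  simp only [linesThrough, Finset.mem_filter]
  exact ⟨fun hN => ⟨hA.mem_class_of_mem hL.1 hK.1 hLK hL.2 hK.2 hN.1 hN.2, hN.2⟩,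
    fun hN => ⟨hA.mem_of_mem_class hN.1, hN.2⟩⟩

theorem eq_of_concurrent (hA : IsNet k q A C) (hij : i ≠ j) (him : i ≠ m)
    (hL : L ∈ C i) (hM : M ∈ C j) (hM' : M' ∈ C j) (hN : N ∈ C m) {p' : ProjPlane}
    (hpL : p ∈ L) (hpM : p ∈ M) (hpN : p ∈ N) (hp'L : p' ∈ L) (hp'M' : p' ∈ M')
    (hp'N : p' ∈ N) : M = M' := by
  have hpp' : p = p' := (hA.isProjLine hL).inter_subsingleton (hA.isProjLine hN)
    (hA.ne_of_mem_class him hL hN) ⟨hpL, hpN⟩ ⟨hp'L, hp'N⟩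
  subst hpp'
  exact hA.eq_of_mem_of_mem hij hL hM hpL hpM hM hM' hpM hp'M'

theorem meet_mem (hA : IsNet k q A C) (hij : i ≠ j) (hL : L ∈ C i) (hK : K ∈ C j) :
    meet L K ∈ L ∩ K :=
  ProjPlane.meet_mem (hA.isProjLine hL) (hA.isProjLine hK) (hA.ne_of_mem_class hij hL hK)

theorem lineThrough_meet (hA : IsNet k q A C) (hij : i ≠ j) (hL : L ∈ C i) (hK : K ∈ C j)
    (m : Fin k) : lineThrough (C m) (meet L K) ∈ C m ∧ meet L K ∈ lineThrough (C m) (meet L K) :=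
  Classical.epsilon_spec (hA.exists_mem_class_of_mem hij hL hK (hA.meet_mem hij hL hK).1
    (hA.meet_mem hij hL hK).2 m)

theorem exists_forall_mem_of_hasConcurrentTriple (hA : IsNet k 4 A C)
    (h : HasConcurrentTriple (C j)) : ∃ p, ∃ M₀ ∈ C j, ∀ M ∈ C j, M ≠ M₀ → p ∈ M := by
  obtain ⟨M₁, h₁, M₂, h₂, M₃, h₃, h₁₂, h₁₃, h₂₃, p, hp₁, hp₂, hp₃⟩ := h
  obtain ⟨M₀, -, hM₀⟩ := (Finset.exists_eq_insert_iff (s := {M₁, M₂, M₃}) (t := C j)).2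
    ⟨by simp [Finset.insert_subset_iff, *],
      by rw [Finset.card_eq_three.2 ⟨_, _, _, h₁₂, h₁₃, h₂₃, rfl⟩, hA.card_class j]⟩
  refine ⟨p, M₀, hM₀ ▸ Finset.mem_insert_self _ _, fun M hM hne => ?_⟩
  rw [← hM₀] at hM
  simp only [Finset.mem_insert, Finset.mem_singleton] at hM
  rcases hM with rfl | rfl | rfl | rfl
  exacts [absurd rfl hne, hp₁, hp₂, hp₃]

theorem lineThrough_meet_injective_right (hA : IsNet k q A C) (hij : i ≠ j) (him : i ≠ m)
    (hL : L ∈ C i) (hM : M ∈ C j) (hM' : M' ∈ C j)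
    (h : lineThrough (C m) (meet L M) = lineThrough (C m) (meet L M')) : M = M' := by
  obtain ⟨hN, hpN⟩ := hA.lineThrough_meet hij hL hM m
  obtain ⟨-, hp'N⟩ := hA.lineThrough_meet hij hL hM' m
  rw [← h] at hp'N
  exact hA.eq_of_concurrent hij him hL hM hM' hN (hA.meet_mem hij hL hM).1
    (hA.meet_mem hij hL hM).2 hpN (hA.meet_mem hij hL hM').1 (hA.meet_mem hij hL hM').2 hp'N

theorem lineThrough_meet_injective_left (hA : IsNet k q A C) (hij : i ≠ j) (hjm : j ≠ m)
    (hL : L ∈ C i) (hL' : L' ∈ C i) (hM : M ∈ C j)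
    (h : lineThrough (C m) (meet L M) = lineThrough (C m) (meet L' M)) : L = L' := by
  obtain ⟨hN, hpN⟩ := hA.lineThrough_meet hij hL hM m
  obtain ⟨-, hp'N⟩ := hA.lineThrough_meet hij hL' hM m
  rw [← h] at hp'N
  exact hA.eq_of_concurrent hij.symm hjm hM hL hL' hN (hA.meet_mem hij hL hM).2
    (hA.meet_mem hij hL hM).1 hpN (hA.meet_mem hij hL' hM).2 (hA.meet_mem hij hL' hM).1 hp'N

theorem meet_ne_meet (hA : IsNet k q A C) (hij : i ≠ j) (hL : L ∈ C i) (hL' : L' ∈ C i)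
    (hLL' : L ≠ L') (hM : M ∈ C j) (hM' : M' ∈ C j) : meet L M ≠ meet L' M' := by
  intro h
  have hM'i := hA.mem_class_of_mem hL hL' hLL' (hA.meet_mem hij hL hM).1
    (h ▸ (hA.meet_mem hij hL' hM').1) (hA.mem_of_mem_class hM') (h ▸ (hA.meet_mem hij hL' hM').2)
  exact hij (hA.eq_of_mem_class hM'i hM')

theorem triplePoints_subsingleton (hA : IsNet k q A C) (hq : q ≤ 4) (i : Fin k) :
    (triplePoints (C i)).Subsingleton :=
  _root_.triplePoints_subsingleton (fun _ hL => hA.isProjLine hL) ((hA.card_class i).trans_le hq)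

end

section
variable {q : ℕ} {A : Finset (Set ProjPlane)} {C : Fin 3 → Finset (Set ProjPlane)}
  {i j : Fin 3} {L K N : Set ProjPlane} {p : ProjPlane}

theorem card_mixedPoints (hA : IsNet 3 q A C) : (mixedPoints C).card = q * q := by
  rw [mixedPoints, Finset.card_image_of_injOn, Finset.card_product, hA.card_class 0,
    hA.card_class 1]
  rintro ⟨L, K⟩ hLK ⟨L', K'⟩ hLK' h
  simp only [Finset.coe_product, Set.mem_prod, Finset.mem_coe] at hLK hLK' h
  have h01 : (0 : Fin 3) ≠ 1 := by decide
  obtain ⟨hpL, hpK⟩ := hA.meet_mem h01 hLK.1 hLK.2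
  obtain ⟨hpL', hpK'⟩ := hA.meet_mem h01 hLK'.1 hLK'.2
  rw [← h] at hpL' hpK'
  exact Prod.ext (hA.eq_of_mem_of_mem h01 hLK.1 hLK.2 hpL hpK hLK.1 hLK'.1 hpL hpL')
    (hA.eq_of_mem_of_mem h01 hLK.1 hLK.2 hpL hpK hLK.2 hLK'.2 hpK hpK')

theorem mem_mixedPoints (hA : IsNet 3 q A C) (hij : i ≠ j) (hL : L ∈ C i) (hK : K ∈ C j)
    (hpL : p ∈ L) (hpK : p ∈ K) : p ∈ mixedPoints C := by
  obtain ⟨X, hX, hpX⟩ := hA.exists_mem_class_of_mem hij hL hK hpL hpK 0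
  obtain ⟨Y, hY, hpY⟩ := hA.exists_mem_class_of_mem hij hL hK hpL hpK 1
  have h01 : (0 : Fin 3) ≠ 1 := by decide
  refine Finset.mem_image.2 ⟨(X, Y), Finset.mem_product.2 ⟨hX, hY⟩, ?_⟩
  exact (hA.isProjLine hX).inter_subsingleton (hA.isProjLine hY) (hA.ne_of_mem_class h01 hX hY)
    (hA.meet_mem h01 hX hY) ⟨hpX, hpY⟩

theorem exists_mem_class_of_mem_mixedPoints (hA : IsNet 3 q A C) (hp : p ∈ mixedPoints C)
    (m : Fin 3) : ∃ N ∈ C m, p ∈ N := by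
  obtain ⟨⟨L, K⟩, hLK, rfl⟩ := Finset.mem_image.1 hp
  rw [Finset.mem_product] at hLK
  have h01 : (0 : Fin 3) ≠ 1 := by decide
  exact hA.exists_mem_class_of_mem h01 hLK.1 hLK.2 (hA.meet_mem h01 hLK.1 hLK.2).1
    (hA.meet_mem h01 hLK.1 hLK.2).2 m

theorem mult_eq_three_of_mem_mixedPoints (hA : IsNet 3 q A C) (hmult : ∀ p, mult A p ≤ 3)
    (hp : p ∈ mixedPoints C) : mult A p = 3 := by
  choose N hN hpN using hA.exists_mem_class_of_mem_mixedPoints hp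
  have hN_inj : Function.Injective N := fun a b h => by
    by_contra hab
    exact hA.ne_of_mem_class hab (hN a) (hN b) h
  refine le_antisymm (hmult p) ?_
  calc 3 = (Finset.univ.image N).card := by rw [Finset.card_image_of_injective _ hN_inj]; rfl
    _ ≤ mult A p := Finset.card_le_card fun L hL => by
      obtain ⟨a, -, rfl⟩ := Finset.mem_image.1 hL
      exact Finset.mem_filter.2 ⟨hA.mem_of_mem_class (hN a), hpN a⟩

theorem mem_class_of_mem_triplePoints (hA : IsNet 3 q A C) (hp : p ∈ triplePoints (C i))
    (hN : N ∈ A) (hpN : p ∈ N) : N ∈ C i := by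
  have hp3 : (linesThrough (C i) p).card = 3 := hp
  have hN' : N ∈ linesThrough A p := Finset.mem_filter.2 ⟨hN, hpN⟩
  rw [hA.linesThrough_eq (i := i) (by omega)] at hN'
  exact (Finset.mem_filter.1 hN').1

theorem mem_triplePoints_of_three_le (hA : IsNet 3 q A C) (hmult : ∀ p, mult A p ≤ 3)
    (hp : 3 ≤ (linesThrough (C i) p).card) : p ∈ triplePoints (C i) := by
  have := hmult p
  rw [mult, hA.linesThrough_eq (i := i) (by omega)] at this
  exact le_antisymm this hp

theorem mult_eq_three_of_mem_triplePoints (hA : IsNet 3 q A C) (hp : p ∈ triplePoints (C i)) :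
    mult A p = 3 := by
  have hp3 : (linesThrough (C i) p).card = 3 := hp
  rw [mult, hA.linesThrough_eq (i := i) (by omega), hp3]

theorem triplePoints_eq (hA : IsNet 3 q A C) (hmult : ∀ p, mult A p ≤ 3) :
    triplePoints A = ↑(mixedPoints C) ∪
      (triplePoints (C 0) ∪ triplePoints (C 1) ∪ triplePoints (C 2)) := by
  ext p
  constructor
  · intro hp
    have hp3 : (linesThrough A p).card = 3 := hp
    obtain ⟨L, hL, K, hK, hLK⟩ := Finset.one_lt_card.1 (by omega : 1 < (linesThrough A p).card)
    simp only [linesThrough, Finset.mem_filter] at hL hK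
    obtain ⟨i, hLi⟩ := hA.exists_mem_class hL.1
    obtain ⟨j, hKj⟩ := hA.exists_mem_class hK.1
    by_cases hij : i = j
    · subst hij
      have h2 : 2 ≤ (linesThrough (C i) p).card := by
        rw [← Finset.card_pair hLK]
        exact Finset.card_le_card (by simp [Finset.insert_subset_iff, linesThrough, *])
      have hpi : p ∈ triplePoints (C i) := by
        show _ = 3
        rwa [← hA.linesThrough_eq h2]
      right
      match i, hpi with
      | 0, h => exact Or.inl (Or.inl h)
      | 1, h => exact Or.inl (Or.inr h)
      | 2, h => exact Or.inr h
    · exact Or.inl (hA.mem_mixedPoints hij hLi hKj hL.2 hK.2)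
  · rintro (hp | (hp | hp) | hp)
    exacts [hA.mult_eq_three_of_mem_mixedPoints hmult hp, hA.mult_eq_three_of_mem_triplePoints hp,
      hA.mult_eq_three_of_mem_triplePoints hp, hA.mult_eq_three_of_mem_triplePoints hp]

theorem disjoint_mixedPoints_triplePoints (hA : IsNet 3 q A C) (i : Fin 3) :
    Disjoint (↑(mixedPoints C)) (triplePoints (C i)) := by
  refine Set.disjoint_left.2 fun p hp hpi => ?_
  obtain ⟨N₀, hN₀, hpN₀⟩ := hA.exists_mem_class_of_mem_mixedPoints hp 0
  obtain ⟨N₁, hN₁, hpN₁⟩ := hA.exists_mem_class_of_mem_mixedPoints hp 1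
  have h₀ := hA.eq_of_mem_class hN₀
    (hA.mem_class_of_mem_triplePoints hpi (hA.mem_of_mem_class hN₀) hpN₀)
  have h₁ := hA.eq_of_mem_class hN₁
    (hA.mem_class_of_mem_triplePoints hpi (hA.mem_of_mem_class hN₁) hpN₁)
  exact absurd (h₀.trans h₁.symm) (by decide)

theorem disjoint_triplePoints (hA : IsNet 3 q A C) (hij : i ≠ j) :
    Disjoint (triplePoints (C i)) (triplePoints (C j)) := by
  refine Set.disjoint_left.2 fun p hpi hpj => hij ?_
  have hp3 : (linesThrough (C i) p).card = 3 := hpi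
  obtain ⟨L, hL⟩ := Finset.card_pos.1 (by omega : 0 < (linesThrough (C i) p).card)
  obtain ⟨hLi, hpL⟩ := Finset.mem_filter.1 hL
  exact hA.eq_of_mem_class hLi (hA.mem_class_of_mem_triplePoints hpj (hA.mem_of_mem_class hLi) hpL)

end

section
variable {A : Finset (Set ProjPlane)} {C : Fin 3 → Finset (Set ProjPlane)}

theorem hasConcurrentTriple_of_hasConcurrentTriple (hA : IsNet 3 4 A C) {i j k : Fin 3}
    (hij : i ≠ j) (hik : i ≠ k) (hjk : j ≠ k) (hi : HasConcurrentTriple (C i))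
    (hj : HasConcurrentTriple (C j)) : HasConcurrentTriple (C k) := by
  obtain ⟨L₀, h₀, L₁, h₁, L₂, h₂, h₀₁, h₀₂, h₁₂, p₀, hp₀, hp₁, hp₂⟩ := hi
  obtain ⟨p₁, M₀, hM₀, hM⟩ := hA.exists_forall_mem_of_hasConcurrentTriple hj
  let L : Fin 3 → C i := ![⟨L₀, h₀⟩, ⟨L₁, h₁⟩, ⟨L₂, h₂⟩]
  have hL : Function.Injective L :=
    injective_vec3 (by simpa using h₀₁) (by simpa using h₀₂) (by simpa using h₁₂)
  let f : C i → C j → C k := fun L M =>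
    ⟨lineThrough (C k) (meet L M), (hA.lineThrough_meet hij L.2 M.2 k).1⟩
  have hrow : ∀ L, Function.Injective (f L) := fun L M M' h => Subtype.ext
    (hA.lineThrough_meet_injective_right hij hik L.2 M.2 M'.2 (congrArg Subtype.val h))
  obtain ⟨y, hy, hy₀, hsq⟩ := exists_symmetric_subsquare (by simp [hA.card_class j])
    (by simp [hA.card_class k]) f hrow (fun M L L' h => Subtype.ext
      (hA.lineThrough_meet_injective_left hij hjk L.2 L'.2 M.2 (congrArg Subtype.val h)))
    hL ⟨M₀, hM₀⟩
  obtain ⟨q, hq⟩ := dual_pappus (L := fun a => L a) (M := fun a => y a)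
    (N := fun a b => f (L a) (y b))
    (fun a => hA.isProjLine (L a).2) (fun a => hA.isProjLine (y a).2)
    (fun a b => hA.isProjLine (f _ _).2)
    (Subtype.val_injective.comp hL) (Subtype.val_injective.comp hy)
    (p₀ := p₀) (by intro a; fin_cases a; exacts [hp₀, hp₁, hp₂])
    (p₁ := p₁) (fun a => hM _ (y a).2 fun e => hy₀ a (Subtype.ext e))
    (fun a b _ => hA.ne_of_mem_class hij (L a).2 (y b).2)
    (fun a b hab => hA.meet_ne_meet hij (L a).2 (L b).2 (fun e => hab (hL (Subtype.ext e)))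
      (y b).2 (y a).2)
    (fun a b _ => ⟨(hA.lineThrough_meet hij (L a).2 (y b).2 k).2,
      (hsq a b).symm ▸ (hA.lineThrough_meet hij (L b).2 (y a).2 k).2⟩)
  have hne : ∀ a b c, b ≠ c → (f (L a) (y b) : Set ProjPlane) ≠ f (L a) (y c) :=
    fun a b c hbc e => hbc (hy (hrow _ (Subtype.ext e)))
  refine ⟨f (L 0) (y 1), (f _ _).2, f (L 0) (y 2), (f _ _).2, f (L 1) (y 2), (f _ _).2,
    hne 0 1 2 (by decide), ?_, ?_, q, hq 0 1 (by decide), hq 0 2 (by decide),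
    hq 1 2 (by decide)⟩
  · rw [hsq 0 1]
    exact hne 1 0 2 (by decide)
  · rw [hsq 0 2, hsq 1 2]
    exact hne 2 0 1 (by decide)

theorem ncard_triplePoints_class (hA : IsNet 3 4 A C) (hmult : ∀ p, mult A p ≤ 3) (i : Fin 3) :
    (triplePoints (C i)).ncard = if HasConcurrentTriple (C i) then 1 else 0 := by
  split_ifs with h
  · obtain ⟨p, hp⟩ := hasConcurrentTriple_iff.1 h
    rw [(hA.triplePoints_subsingleton le_rfl i).eq_singleton_of_mem
      (hA.mem_triplePoints_of_three_le hmult hp), Set.ncard_singleton]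
  · rw [Set.eq_empty_of_forall_notMem (s := triplePoints (C i))
      fun p hp => h (hasConcurrentTriple_iff.2 ⟨p, Eq.ge hp⟩), Set.ncard_empty]

theorem ncard_triplePoints (hA : IsNet 3 4 A C) (hmult : ∀ p, mult A p ≤ 3) :
    (triplePoints A).ncard = 16 + (triplePoints (C 0)).ncard + (triplePoints (C 1)).ncard +
      (triplePoints (C 2)).ncard := by
  have hfin := fun i => (hA.triplePoints_subsingleton le_rfl i).finite
  have hd : ∀ {i j : Fin 3}, i ≠ j → Disjoint (triplePoints (C i)) (triplePoints (C j)) :=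
    hA.disjoint_triplePoints
  rw [hA.triplePoints_eq hmult, Set.ncard_union_eq
      (Set.disjoint_union_right.2 ⟨Set.disjoint_union_right.2
        ⟨hA.disjoint_mixedPoints_triplePoints 0, hA.disjoint_mixedPoints_triplePoints 1⟩,
        hA.disjoint_mixedPoints_triplePoints 2⟩)
      (Finset.finite_toSet _) (((hfin 0).union (hfin 1)).union (hfin 2)),
    Set.ncard_coe_finset, hA.card_mixedPoints,
    Set.ncard_union_eq (Set.disjoint_union_left.2 ⟨hd (by decide), hd (by decide)⟩)
      ((hfin 0).union (hfin 1)) (hfin 2),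
    Set.ncard_union_eq (hd (by decide)) (hfin 0) (hfin 1)]
  ring

end

end IsNet

/-- A (3,4)-net with only double and triple points satisfies exactly one of:
(1) no class has a concurrent triple and there are 16 triple points;
(2) each class has exactly one concurrent triple and there are 19 triple points;
(3) exactly one class has a concurrent triple and there are 17 triple points.
(The three alternatives are mutually exclusive since the triple point counts differ.) -/
theorem statement7 (A : Finset (Set ProjPlane)) (C : Fin 3 → Finset (Set ProjPlane))
    (hA : IsNet 3 4 A C)
    (hmult : ∀ p : ProjPlane, IsMultPoint A p → mult A p = 2 ∨ mult A p = 3) :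
    ((∀ i, ¬ HasConcurrentTriple (C i)) ∧
      {p : ProjPlane | mult A p = 3}.ncard = 16) ∨
    ((∀ i, {p : ProjPlane | (linesThrough (C i) p).card = 3}.ncard = 1) ∧
      {p : ProjPlane | mult A p = 3}.ncard = 19) ∨
    ((∃ i, HasConcurrentTriple (C i) ∧ ∀ j, j ≠ i → ¬ HasConcurrentTriple (C j)) ∧
      {p : ProjPlane | mult A p = 3}.ncard = 17) := by
  have hle : ∀ p, mult A p ≤ 3 := fun p => by
    by_cases h : IsMultPoint A p
    · rcases hmult p h with h | h <;> omega
    · unfold IsMultPoint at h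
      omega
  have hcount : {p : ProjPlane | mult A p = 3}.ncard = _ := hA.ncard_triplePoints hle
  have hclass : ∀ i, {p : ProjPlane | (linesThrough (C i) p).card = 3}.ncard =
      if HasConcurrentTriple (C i) then 1 else 0 := hA.ncard_triplePoints_class hle
  have h₀ := hA.hasConcurrentTriple_of_hasConcurrentTriple (i := 1) (j := 2) (k := 0)
    (by decide) (by decide) (by decide)
  have h₁ := hA.hasConcurrentTriple_of_hasConcurrentTriple (i := 0) (j := 2) (k := 1)
    (by decide) (by decide) (by decide)
  have h₂ := hA.hasConcurrentTriple_of_hasConcurrentTriple (i := 0) (j := 1) (k := 2)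
    (by decide) (by decide) (by decide)
  rw [hcount]
  simp only [triplePoints, hclass, Fin.forall_fin_succ, Fin.exists_fin_succ] at *
  by_cases c₀ : HasConcurrentTriple (C 0) <;> by_cases c₁ : HasConcurrentTriple (C 1) <;>
    by_cases c₂ : HasConcurrentTriple (C 2) <;> simp_all
end
end

section
/- Let A be an arrangement of 12 distinct lines in P^2(C) all of whose multiple points have multiplicity at most 5. If η : A → F_2 is a non-constant 2-cocycle of A, then η takes each of the two values of F_2 on exactly 6 lines of A. -/
open scoped Classical

noncomputable section

/-!
Fix a line `L` and let `a`, `b` be the sizes of its colour class and of the other one. A line `K`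
of the other colour meets `L` in a point carrying lines of both colours; there the cocycle
condition makes the multiplicity even and the number of lines of each colour even, so with
multiplicity at most 5 exactly two lines of each colour pass through it. Double count the pairs
`(K, M)` of a line `K` of the other colour and a line `M ≠ L` of `L`'s colour concurrent with `L`:
each `K` lies in exactly one pair, each `M` (which meets `L` in a single point) in none or two.
Hence `b` is even and `b ≤ 2 (a - 1)`; symmetrically for `a`, and `a + b = 12` forces `a = b = 6`.
-/

open Finset

namespace Projectivization

variable {k V : Type*} [DivisionRing k] [AddCommGroup V] [Module k V]

theorem existsUnique_rep_mem {W : Submodule k V} (hW : Module.finrank k W = 1) :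
    ∃! p : Projectivization k V, p.rep ∈ W := by
  have : FiniteDimensional k W := Module.finite_of_finrank_eq_succ hW
  refine ⟨mk'' W hW, ?_, fun q hq => submodule_injective ?_⟩
  · have h := Submodule.mem_span_singleton_self (R := k) (mk'' W hW).rep
    rwa [← submodule_eq, submodule_mk''] at h
  · refine (submodule_mk'' W hW).symm ▸ Submodule.eq_of_le_of_finrank_eq ?_ ?_
    · rwa [submodule_eq, Submodule.span_singleton_le_iff_mem]
    · rw [finrank_submodule, hW]

end Projectivization

namespace Module.Dual

open LinearMap

variable {k V : Type*} [Field k] [AddCommGroup V] [Module k V] [FiniteDimensional k V]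

theorem finrank_ker_inf_ker_add_two {f g : Module.Dual k V} (hf : f ≠ 0) (hg : g ≠ 0)
    (hfg : ker f ≠ ker g) : finrank k ↥(ker f ⊓ ker g) + 2 = finrank k V := by
  have hkf := finrank_ker_add_one_of_ne_zero hf
  have hkg := finrank_ker_add_one_of_ne_zero hg
  have hlt : ker f < ker f ⊔ ker g := by
    refine lt_of_le_of_ne le_sup_left fun h => hfg ?_
    exact (Submodule.eq_of_le_of_finrank_eq (h ▸ le_sup_right) (by omega)).symm
  have := Submodule.finrank_lt_finrank_of_lt hlt
  have := Submodule.finrank_le (ker f ⊔ ker g)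
  have := Submodule.finrank_sup_add_finrank_inf_eq (ker f) (ker g)
  omega

end Module.Dual

theorem IsProjLine.existsUnique_mem_inter {L K : Set ProjPlane} (hL : IsProjLine L)
    (hK : IsProjLine K) (hLK : L ≠ K) : ∃! p : ProjPlane, p ∈ L ∧ p ∈ K := by
  obtain ⟨f, hf, rfl⟩ := hL
  obtain ⟨g, hg, rfl⟩ := hK
  have hfg : LinearMap.ker f ≠ LinearMap.ker g := fun h => hLK <| by
    ext p
    simp only [Set.mem_ofPred_eq, ← LinearMap.mem_ker, h]
  have hW := Module.Dual.finrank_ker_inf_ker_add_two hf hg hfg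
  rw [Module.finrank_fin_fun] at hW
  simpa [Submodule.mem_inf] using
    Projectivization.existsUnique_rep_mem (W := LinearMap.ker f ⊓ LinearMap.ker g) (by omega)

def Concurrent (L K M : Set ProjPlane) : Prop :=
  (L ∩ K ∩ M).Nonempty

theorem concurrent_comm_right {L K M : Set ProjPlane} : Concurrent L K M ↔ Concurrent L M K := by
  rw [Concurrent, Concurrent, Set.inter_right_comm]

theorem IsProjLine.concurrent_iff_mem {L K M : Set ProjPlane} {p : ProjPlane}
    (hL : IsProjLine L) (hK : IsProjLine K) (hLK : L ≠ K) (hp : p ∈ L ∩ K) :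
    Concurrent L K M ↔ p ∈ M := by
  refine ⟨fun ⟨q, hqLK, hqM⟩ => ?_, fun hpM => ⟨p, hp, hpM⟩⟩
  exact (hL.existsUnique_mem_inter hK hLK).unique hqLK hp ▸ hqM

theorem ZMod.two_eq_or_eq_of_ne : ∀ {x y : ZMod 2}, x ≠ y → ∀ z, z = x ∨ z = y := by
  decide

theorem ZMod.two_card_filter_add_card_filter {ι : Type*} (s : Finset ι) (f : ι → ZMod 2)
    {x y : ZMod 2} (hxy : x ≠ y) : #(s.filter (f · = x)) + #(s.filter (f · = y)) = #s := by
  refine (congrArg _ (congrArg _ (filter_congr fun i _ => ?_))).trans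
    (card_filter_add_card_filter_not (s := s) (f · = x))
  rcases ZMod.two_eq_or_eq_of_ne hxy (f i) with h | h <;> simp [h, hxy, hxy.symm]

theorem ZMod.two_sum_eq_card_filter {ι : Type*} (s : Finset ι) (f : ι → ZMod 2) :
    ∑ i ∈ s, f i = #(s.filter (f · = 1)) := by
  rw [natCast_card_filter]
  exact sum_congr rfl fun i _ => by generalize f i = x; revert x; decide

section Cocycle

variable {A : Finset (Set ProjPlane)} {η : Set ProjPlane → ZMod 2}

theorem IsCocycle.card_filter_linesThrough_eq_two (hη : IsCocycle 2 A η)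
    (hmult : ∀ p : ProjPlane, IsMultPoint A p → mult A p ≤ 5) {p : ProjPlane}
    {L K : Set ProjPlane} (hL : L ∈ linesThrough A p) (hK : K ∈ linesThrough A p)
    (hLK : η L ≠ η K) (v : ZMod 2) : #((linesThrough A p).filter (η · = v)) = 2 := by
  have hp : IsMultPoint A p := one_lt_card.mpr ⟨L, hL, K, hK, fun h => hLK (h ▸ rfl)⟩
  have hm : mult A p = #(linesThrough A p) := rfl
  have hdvd : 2 ∣ mult A p := by
    by_contra h
    exact hLK ((hη p hp).2 h L hL K hK)
  have heven : 2 ∣ #((linesThrough A p).filter (η · = 1)) := by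
    rw [← ZMod.natCast_eq_zero_iff, ← ZMod.two_sum_eq_card_filter]
    exact (hη p hp).1 hdvd
  have hsplit := ZMod.two_card_filter_add_card_filter (linesThrough A p) η zero_ne_one
  have hpos : ∀ w, 0 < #((linesThrough A p).filter (η · = w)) := fun w => by
    rcases ZMod.two_eq_or_eq_of_ne hLK w with rfl | rfl
    exacts [card_pos.mpr ⟨L, mem_filter.mpr ⟨hL, rfl⟩⟩,
      card_pos.mpr ⟨K, mem_filter.mpr ⟨hK, rfl⟩⟩]
  have h0 := hpos 0
  have h1 := hpos 1
  have := hmult p hp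
  rcases ZMod.two_eq_or_eq_of_ne zero_ne_one v with rfl | rfl <;> omega

theorem IsCocycle.card_concurrent_eq_one (hlines : ∀ L ∈ A, IsProjLine L)
    (hmult : ∀ p : ProjPlane, IsMultPoint A p → mult A p ≤ 5) (hη : IsCocycle 2 A η)
    {L K : Set ProjPlane} (hL : L ∈ A) (hK : K ∈ A) (hLK : η L ≠ η K) :
    #(((A.filter (η · = η L)).erase L).bipartiteAbove (Concurrent L) K) = 1 := by
  have hKL : L ≠ K := by rintro rfl; exact hLK rfl
  obtain ⟨p, hp, -⟩ := (hlines L hL).existsUnique_mem_inter (hlines K hK) hKL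
  have hLp : L ∈ (linesThrough A p).filter (η · = η L) :=
    mem_filter.mpr ⟨mem_filter.mpr ⟨hL, hp.1⟩, rfl⟩
  have hKp : K ∈ linesThrough A p := mem_filter.mpr ⟨hK, hp.2⟩
  have : ((A.filter (η · = η L)).erase L).bipartiteAbove (Concurrent L) K =
      ((linesThrough A p).filter (η · = η L)).erase L := by
    ext M
    simp only [mem_bipartiteAbove, (hlines L hL).concurrent_iff_mem (hlines K hK) hKL hp,
      mem_erase, mem_filter, linesThrough]
    tauto
  rw [this, card_erase_of_mem hLp,
    hη.card_filter_linesThrough_eq_two hmult (mem_filter.mp hLp).1 hKp hLK]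

theorem IsCocycle.card_concurrent_eq_zero_or_two (hlines : ∀ L ∈ A, IsProjLine L)
    (hmult : ∀ p : ProjPlane, IsMultPoint A p → mult A p ≤ 5) (hη : IsCocycle 2 A η)
    {L M : Set ProjPlane} (hL : L ∈ A) (hM : M ∈ A) (hLM : L ≠ M) {v : ZMod 2}
    (hv : η L ≠ v) :
    #((A.filter (η · = v)).bipartiteBelow (Concurrent L) M) = 0 ∨
      #((A.filter (η · = v)).bipartiteBelow (Concurrent L) M) = 2 := by
  obtain ⟨p, hp, -⟩ := (hlines L hL).existsUnique_mem_inter (hlines M hM) hLM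
  have : (A.filter (η · = v)).bipartiteBelow (Concurrent L) M =
      (linesThrough A p).filter (η · = v) := by
    ext K
    simp only [mem_bipartiteBelow, concurrent_comm_right,
      (hlines L hL).concurrent_iff_mem (hlines M hM) hLM hp, mem_filter, linesThrough]
    tauto
  rw [this]
  rcases ((linesThrough A p).filter (η · = v)).eq_empty_or_nonempty with h | ⟨K, hK⟩
  · simp [h]
  · obtain ⟨hKp, hKv⟩ := mem_filter.mp hK
    exact .inr (hη.card_filter_linesThrough_eq_two hmult (mem_filter.mpr ⟨hL, hp.1⟩) hKp
      (hKv ▸ hv) v)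

theorem IsCocycle.even_card_filter_and_card_add_two_le (hlines : ∀ L ∈ A, IsProjLine L)
    (hmult : ∀ p : ProjPlane, IsMultPoint A p → mult A p ≤ 5) (hη : IsCocycle 2 A η)
    {L : Set ProjPlane} (hL : L ∈ A) {v : ZMod 2} (hv : η L ≠ v) :
    Even #(A.filter (η · = v)) ∧
      #(A.filter (η · = v)) + 2 ≤ 2 * #(A.filter (η · = η L)) := by
  set B := A.filter (η · = v)
  set S := (A.filter (η · = η L)).erase L
  have hbelow : ∀ M ∈ S, #(B.bipartiteBelow (Concurrent L) M) = 0 ∨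
      #(B.bipartiteBelow (Concurrent L) M) = 2 := fun M hM =>
    hη.card_concurrent_eq_zero_or_two hlines hmult hL (mem_filter.mp (mem_of_mem_erase hM)).1
      (ne_of_mem_erase hM).symm hv
  have habove : ∀ K ∈ B, #(S.bipartiteAbove (Concurrent L) K) = 1 := fun K hK =>
    hη.card_concurrent_eq_one hlines hmult hL (mem_filter.mp hK).1 ((mem_filter.mp hK).2 ▸ hv)
  have hcount : #B = ∑ M ∈ S, #(B.bipartiteBelow (Concurrent L) M) := by
    rw [← sum_card_bipartiteAbove_eq_sum_card_bipartiteBelow, sum_congr rfl habove, sum_const,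
      smul_eq_mul, mul_one]
  have hS : #S + 1 = #(A.filter (η · = η L)) := card_erase_add_one (mem_filter.mpr ⟨hL, rfl⟩)
  have hle : #B ≤ #S * 2 := by
    rw [hcount]
    exact sum_le_card_nsmul S _ 2 fun M hM => by rcases hbelow M hM with h | h <;> omega
  refine ⟨?_, by omega⟩
  rw [hcount]
  exact even_sum _ fun M hM => by rcases hbelow M hM with h | h <;> simp [h]

end Cocycle

/-- if an arrangement of 12 lines with points of multiplicity at most 5
admits a non-constant 2-cocycle `η`, then `η` takes each of the two values of `F₂` on
exactly 6 lines. -/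
theorem statement12 (A : Finset (Set ProjPlane))
    (hlines : ∀ L ∈ A, IsProjLine L) (hcard : A.card = 12)
    (hmult : ∀ p : ProjPlane, IsMultPoint A p → mult A p ≤ 5)
    (η : Set ProjPlane → ZMod 2) (hη : IsCocycle 2 A η) (hnc : NonConstant A η) :
    ∀ v : ZMod 2, (A.filter fun L => η L = v).card = 6 := by
  obtain ⟨L, hL, K, hK, hLK⟩ := hnc
  obtain ⟨⟨t, ht⟩, hle⟩ := hη.even_card_filter_and_card_add_two_le hlines hmult hL hLK
  obtain ⟨⟨s, hs⟩, hle'⟩ := hη.even_card_filter_and_card_add_two_le hlines hmult hK hLK.symm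
  have hsum := ZMod.two_card_filter_add_card_filter A η hLK
  intro v
  rcases ZMod.two_eq_or_eq_of_ne hLK v with rfl | rfl <;> omega
end
end
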